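/- For real symmetric positive definite n×n matrices A and B, Tr(√(√A·B·√A)) is jointly concave in (A,B) on pairs of positive definite matrices; equivalently, (A,B) ↦ ρ²(A,B) is jointly convex. -/

import Mathlib

open Matrix BigOperators

open Classical in
noncomputable def msqrt {n : ℕ} (M : Matrix (Fin n) (Fin n) ℝ) : Matrix (Fin n) (Fin n) ℝ :=
  if h : M.PosSemidef then (h.1.eigenvectorUnitary : Matrix (Fin n) (Fin n) ℝ) *
    diagonal (Real.sqrt ∘ h.1.eigenvalues) * (star h.1.eigenvectorUnitary : Matrix (Fin n) (Fin n) ℝ) else 0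

noncomputable def fnorm {n : ℕ} (A : Matrix (Fin n) (Fin n) ℝ) : ℝ :=
  Real.sqrt (∑ i, ∑ j, (A i j) ^ 2)

/-!
For positive definite `A`, `B`, `T` one has `2 Tr √(√A B √A) ≤ Tr (T A) + Tr (T⁻¹ B)`, with equality
at `T = A^{-1/2} (√A B √A)^{1/2} A^{-1/2}`: after conjugating by `√A` this is the matrix AM-GM
inequality `2 Tr S ≤ Tr (W⁻¹ S²) + Tr W`, i.e. `Tr ((S - W) W⁻¹ (S - W)) ≥ 0`. So `Tr √(√A B √A)` is
a pointwise minimum of linear functions of `(A, B)`, hence jointly concave, and `ρ²` is a linear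
function minus twice it.
-/

theorem concaveOn_of_isLeast_range {𝕜 E β ι : Type*} [Semiring 𝕜] [PartialOrder 𝕜]
    [AddCommMonoid E] [AddCommMonoid β] [PartialOrder β] [IsOrderedAddMonoid β]
    [SMul 𝕜 E] [SMul 𝕜 β] [PosSMulMono 𝕜 β] {s : Set E} {f : E → β} {g : ι → E → β}
    (hs : Convex 𝕜 s) (hg : ∀ i, ConcaveOn 𝕜 s (g i))
    (hf : ∀ x ∈ s, IsLeast (Set.range fun i => g i x) (f x)) : ConcaveOn 𝕜 s f := by
  refine ⟨hs, fun x hx y hy a b ha hb hab => ?_⟩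
  obtain ⟨⟨i, hi⟩, -⟩ := hf _ (hs hx hy ha hb hab)
  calc a • f x + b • f y ≤ a • g i x + b • g i y :=
        add_le_add (smul_le_smul_of_nonneg_left ((hf x hx).2 ⟨i, rfl⟩) ha)
          (smul_le_smul_of_nonneg_left ((hf y hy).2 ⟨i, rfl⟩) hb)
    _ ≤ g i (a • x + b • y) := (hg i).2 hx hy ha hb hab
    _ = f (a • x + b • y) := hi

namespace Matrix

theorem convex_setOf_posDef {m : Type*} [Fintype m] :
    Convex ℝ {M : Matrix m m ℝ | M.PosDef} := by
  intro A hA B hB a b ha hb hab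
  rcases ha.eq_or_lt with rfl | ha
  · simpa [show b = 1 by linarith] using hB
  · exact (hA.smul ha).add_posSemidef (hB.posSemidef.smul hb)

variable {m : Type*} [Fintype m] [DecidableEq m]

theorem two_mul_trace_le_trace_inv_mul_add_trace {S W : Matrix m m ℝ} (hS : S.IsHermitian)
    (hW : W.PosDef) : 2 * S.trace ≤ (W⁻¹ * (S * S)).trace + W.trace := by
  let _ := hW.isUnit.invertible
  have key := (hW.inv.posSemidef.conjTranspose_mul_mul_same (S - W)).trace_nonneg
  have hexpand : (S - W)ᴴ * W⁻¹ * (S - W) = S * W⁻¹ * S - S - S + W := by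
    rw [conjTranspose_sub, hS.eq, hW.1.eq]
    simp only [sub_mul, mul_sub, mul_assoc, mul_inv_of_invertible, inv_mul_of_invertible, mul_one,
      one_mul]
    abel
  have hcyc : (S * W⁻¹ * S).trace = (W⁻¹ * (S * S)).trace := by
    rw [mul_assoc, trace_mul_comm, mul_assoc]
  rw [hexpand, trace_add, trace_sub, trace_sub, hcyc] at key
  linarith

theorem PosDef.mul_mul_same_of_posDef {B R : Matrix m m ℝ} (hB : B.PosDef) (hR : R.PosDef) :
    (R * B * R).PosDef := by
  simpa only [hR.1.eq] using hB.conjTranspose_mul_mul_same (mulVec_injective_of_isUnit hR.isUnit)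

noncomputable def tracePairing (T : Matrix m m ℝ) : Matrix m m ℝ × Matrix m m ℝ →ₗ[ℝ] ℝ where
  toFun p := ((T * p.1).trace + (T⁻¹ * p.2).trace) / 2
  map_add' p q := by
    simp only [Prod.fst_add, Prod.snd_add, mul_add, trace_add]
    ring
  map_smul' c p := by
    simp only [Prod.smul_fst, Prod.smul_snd, Matrix.mul_smul, trace_smul, smul_eq_mul,
      RingHom.id_apply]
    ring

end Matrix

section msqrt

variable {n : ℕ} {A : Matrix (Fin n) (Fin n) ℝ}

theorem msqrt_of_posSemidef (hA : A.PosSemidef) :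
    msqrt A = Unitary.conjStarAlgAut ℝ _ hA.1.eigenvectorUnitary
      (diagonal (Real.sqrt ∘ hA.1.eigenvalues)) :=
  dif_pos hA

theorem Matrix.PosSemidef.msqrt (hA : A.PosSemidef) : (msqrt A).PosSemidef := by
  rw [msqrt_of_posSemidef hA, Unitary.conjStarAlgAut_apply, star_eq_conjTranspose]
  exact (posSemidef_diagonal_iff.2 fun i => Real.sqrt_nonneg _).mul_mul_conjTranspose_same _

theorem msqrt_mul_msqrt (hA : A.PosSemidef) : msqrt A * msqrt A = A := by
  have hD : diagonal (Real.sqrt ∘ hA.1.eigenvalues) * diagonal (Real.sqrt ∘ hA.1.eigenvalues) =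
      diagonal (RCLike.ofReal ∘ hA.1.eigenvalues) := by
    rw [diagonal_mul_diagonal]
    congr 1
    ext i
    simp [Real.mul_self_sqrt (hA.eigenvalues_nonneg i)]
  conv_rhs => rw [hA.1.spectral_theorem]
  rw [msqrt_of_posSemidef hA, ← map_mul, hD]

theorem Matrix.PosDef.msqrt (hA : A.PosDef) : (msqrt A).PosDef := by
  refine hA.posSemidef.msqrt.posDef_iff_det_ne_zero.2 fun h => hA.det_pos.ne' ?_
  rw [← msqrt_mul_msqrt hA.posSemidef, det_mul, h, zero_mul]

end msqrt

section variational

variable {n : ℕ} {A B T : Matrix (Fin n) (Fin n) ℝ}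

theorem two_mul_trace_msqrt_le (hA : A.PosDef) (hB : B.PosDef) (hT : T.PosDef) :
    2 * (msqrt (msqrt A * B * msqrt A)).trace ≤ (T * A).trace + (T⁻¹ * B).trace := by
  set R := msqrt A
  have hR : R.PosDef := hA.msqrt
  have hRR : R * R = A := msqrt_mul_msqrt hA.posSemidef
  let _ := hR.isUnit.invertible
  have hRBR := hB.mul_mul_same_of_posDef hR
  have key := two_mul_trace_le_trace_inv_mul_add_trace hRBR.msqrt.1 (hT.mul_mul_same_of_posDef hR)
  rw [msqrt_mul_msqrt hRBR.posSemidef] at key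
  have h1 : ((R * T * R)⁻¹ * (R * B * R)).trace = (T⁻¹ * B).trace := by
    simp only [Matrix.mul_inv_rev, mul_assoc, inv_mul_cancel_left_of_invertible]
    rw [trace_mul_comm]
    simp only [mul_assoc, mul_inv_of_invertible, mul_one]
  have h2 : (R * T * R).trace = (T * A).trace := by
    rw [trace_mul_cycle, trace_mul_comm, hRR]
  linarith

theorem exists_posDef_trace_add_eq (hA : A.PosDef) (hB : B.PosDef) :
    ∃ T : Matrix (Fin n) (Fin n) ℝ, T.PosDef ∧
      (T * A).trace + (T⁻¹ * B).trace = 2 * (msqrt (msqrt A * B * msqrt A)).trace := by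
  set R := msqrt A
  have hR : R.PosDef := hA.msqrt
  have hRR : R * R = A := msqrt_mul_msqrt hA.posSemidef
  let _ := hR.isUnit.invertible
  have hRBR := hB.mul_mul_same_of_posDef hR
  set S := msqrt (R * B * R)
  have hS : S.PosDef := hRBR.msqrt
  have hSS : S * S = R * B * R := msqrt_mul_msqrt hRBR.posSemidef
  let _ := hS.isUnit.invertible
  refine ⟨R⁻¹ * S * R⁻¹, hS.mul_mul_same_of_posDef hR.inv, ?_⟩
  have h1 : (R⁻¹ * S * R⁻¹ * A).trace = S.trace := by
    rw [← hRR]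
    simp only [mul_assoc, inv_mul_cancel_left_of_invertible]
    rw [trace_mul_comm]
    simp only [mul_assoc, mul_inv_of_invertible, mul_one]
  have h2 : ((R⁻¹ * S * R⁻¹)⁻¹ * B).trace = S.trace := by
    calc ((R⁻¹ * S * R⁻¹)⁻¹ * B).trace = (S⁻¹ * (R * B * R)).trace := by
          simp only [Matrix.mul_inv_rev, inv_inv_of_invertible, mul_assoc]
          rw [trace_mul_comm]
          simp only [mul_assoc]
      _ = S.trace := by rw [← hSS, inv_mul_cancel_left_of_invertible]
  rw [h1, h2]
  ring

theorem isLeast_tracePairing (hA : A.PosDef) (hB : B.PosDef) :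
    IsLeast
      (Set.range fun T : {T : Matrix (Fin n) (Fin n) ℝ // T.PosDef} => tracePairing T.1 (A, B))
      (msqrt (msqrt A * B * msqrt A)).trace := by
  refine ⟨?_, ?_⟩
  · obtain ⟨T, hT, h⟩ := exists_posDef_trace_add_eq hA hB
    refine ⟨⟨T, hT⟩, ?_⟩
    simp only [tracePairing, LinearMap.coe_mk, AddHom.coe_mk, h]
    ring
  · rintro _ ⟨⟨T, hT⟩, rfl⟩
    have := two_mul_trace_msqrt_le hA hB hT
    simp only [tracePairing, LinearMap.coe_mk, AddHom.coe_mk]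
    linarith

end variational

theorem stmt_17 {n : ℕ} :
    ConcaveOn ℝ {p : Matrix (Fin n) (Fin n) ℝ × Matrix (Fin n) (Fin n) ℝ |
        p.1.PosDef ∧ p.2.PosDef}
      (fun p => (msqrt (msqrt p.1 * p.2 * msqrt p.1)).trace) ∧
    ConvexOn ℝ {p : Matrix (Fin n) (Fin n) ℝ × Matrix (Fin n) (Fin n) ℝ |
        p.1.PosDef ∧ p.2.PosDef}
      (fun p => p.1.trace + p.2.trace -
        2 * (msqrt (msqrt p.1 * p.2 * msqrt p.1)).trace) := by
  have hs : Convex ℝ {p : Matrix (Fin n) (Fin n) ℝ × Matrix (Fin n) (Fin n) ℝ |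
      p.1.PosDef ∧ p.2.PosDef} :=
    convex_setOf_posDef.prod convex_setOf_posDef
  have hconc := concaveOn_of_isLeast_range (ι := {T : Matrix (Fin n) (Fin n) ℝ // T.PosDef}) hs
    (fun T => (tracePairing T.1).concaveOn hs) fun p hp => isLeast_tracePairing hp.1 hp.2
  have htrace := ((traceLinearMap _ ℝ ℝ).coprod (traceLinearMap _ ℝ ℝ)).convexOn hs
  exact ⟨hconc, htrace.sub (hconc.smul zero_le_two)⟩
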